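/- arXiv:2209.00767 — 2 statements merged into one kernel-verified Lean document; each statement's English description precedes it below -/
import Mathlib

section
/- For a partition λ = (λ_1,…,λ_l) with λ_l = 0, the even orthogonal character bialternant formula equals the determinant det(x_i^{λ_j+l−j} + x_i^{−(λ_j+l−j)})_{i,j=1}^l / det(x_i^{l−j} + x_i^{−(l−j)})_{i,j=1}^l = det( h_{λ_i−i+j}(x^±) − h_{λ_i−i−j}(x^±) )_{i,j=1}^l. -/
open scoped BigOperators
noncomputable section

/-- The multiplicative inverse of `1 - a·w` in `R[[w]]` (its constant coefficient is the unit 1). -/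
def geomInv (R : Type*) [CommRing R] (a : R) : PowerSeries R :=
  PowerSeries.invOfUnit (1 - PowerSeries.C a * PowerSeries.X) 1

/-- The generalized complete homogeneous functions attached to a list `xs` of elements of `R`:
`∏_{a ∈ xs} 1/(1 - a w) = ∑_k h_k w^k`, with `h_k = 0` for `k < 0`. -/
def genH (R : Type*) [CommRing R] (xs : List R) (k : ℤ) : R :=
  if k < 0 then 0 else PowerSeries.coeff k.toNat (xs.map (geomInv R)).prod

/-- The list `x_1, …, x_n, x_1⁻¹, …, x_n⁻¹`. -/
def pmList {F : Type*} [Field F] {n : ℕ} (x : Fin n → F) : List F :=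
  List.ofFn x ++ List.ofFn (fun i => (x i)⁻¹)

/-- Symplectic Jacobi–Trudi determinant
`det( h_{λ_i−i+j} + [j>1] h_{λ_i−i−j+2} )_{i,j=1}^N` (1-based indices). -/
def spJT (R : Type*) [CommRing R] (h : ℤ → R) (N : ℕ) (lam : Fin N → ℤ) : R :=
  Matrix.det (Matrix.of fun i j : Fin N =>
    h (lam i - (i : ℕ) + (j : ℕ)) +
      if 1 ≤ (j : ℕ) then h (lam i - (i : ℕ) - (j : ℕ)) else 0)

/-- Skew symplectic Jacobi–Trudi determinant
`det( h_{λ_i−μ_j−i+j} + [j>l+1] h_{λ_i−i−j+2l+2} )_{i,j=1}^N` (1-based indices),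
where `μ_j = 0` for `j > l`. -/
def spSkewJT (R : Type*) [CommRing R] (h : ℤ → R) (N l : ℕ)
    (lam : Fin N → ℤ) (mu : Fin l → ℤ) : R :=
  Matrix.det (Matrix.of fun i j : Fin N =>
    h (lam i - (if hj : (j : ℕ) < l then mu ⟨j, hj⟩ else 0) - (i : ℕ) + (j : ℕ)) +
      if l < (j : ℕ) then h (lam i - (i : ℕ) - (j : ℕ) + 2 * l) else 0)

/-- Orthogonal Jacobi–Trudi determinant `det( h_{λ_i−i+j} − h_{λ_i−i−j} )_{i,j=1}^N`
(1-based indices). -/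
def oJT (R : Type*) [CommRing R] (h : ℤ → R) (N : ℕ) (lam : Fin N → ℤ) : R :=
  Matrix.det (Matrix.of fun i j : Fin N =>
    h (lam i - (i : ℕ) + (j : ℕ)) - h (lam i - (i : ℕ) - (j : ℕ) - 2))

/-- Skew orthogonal Jacobi–Trudi determinant
`det( h_{λ_i−μ_j−i+j} − [j>l] h_{λ_i−i−j+2l} )_{i,j=1}^N` (1-based indices). -/
def oSkewJT (R : Type*) [CommRing R] (h : ℤ → R) (N l : ℕ)
    (lam : Fin N → ℤ) (mu : Fin l → ℤ) : R :=
  Matrix.det (Matrix.of fun i j : Fin N =>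
    h (lam i - (if hj : (j : ℕ) < l then mu ⟨j, hj⟩ else 0) - (i : ℕ) + (j : ℕ)) -
      if l ≤ (j : ℕ) then h (lam i - (i : ℕ) - (j : ℕ) + 2 * l - 2) else 0)

/-- Schur Jacobi–Trudi determinant `det( h_{λ_i−i+j} )_{i,j=1}^N`. -/
def schurJT (R : Type*) [CommRing R] (h : ℤ → R) (N : ℕ) (lam : Fin N → ℤ) : R :=
  Matrix.det (Matrix.of fun i j : Fin N => h (lam i - (i : ℕ) + (j : ℕ)))

/-!
Write `H(w) = ∏ᵢ 1/((1 - xᵢ w)(1 - xᵢ⁻¹ w)) = ∑ₖ hₖ wᵏ`. For each `j` the polynomial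
`Gⱼ(w) = (1 - w²) ∏_{i ≠ j} (1 - xᵢ w)(1 - xᵢ⁻¹ w)` satisfies
`H Gⱼ = 1/(1 - xⱼ w) + 1/(1 - xⱼ⁻¹ w) - 1`, so `xⱼᵐ + xⱼ⁻ᵐ - [m = 0]` is the coefficient of
`wᵐ` in `H Gⱼ`. As `Gⱼ` has degree `2l`, is antisymmetric under `wᵏ ↦ w²ˡ⁻ᵏ` and has no
middle coefficient, this coefficient is `∑_c (h_{m-l+1+c} - h_{m-l-1-c}) [w^{l-1-c}] Gⱼ`.
Taking `m = λᵢ + l - 1 - i` (indices from `0`) factors the transposed numerator matrix as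
the orthogonal Jacobi–Trudi matrix times the coefficient matrix of the `Gⱼ`, with the single
row where `m = 0` doubled. For `λ = 0` the Jacobi–Trudi matrix is unitriangular, so the same
factorization gives the denominator, and the common factor cancels.
-/

namespace PowerSeries

variable {R : Type*} [CommRing R]

def intCoeff (f : PowerSeries R) (k : ℤ) : R :=
  if k < 0 then 0 else coeff k.toNat f

lemma intCoeff_of_neg (f : PowerSeries R) {k : ℤ} (hk : k < 0) : f.intCoeff k = 0 :=
  if_pos hk

lemma intCoeff_zero (f : PowerSeries R) : f.intCoeff 0 = constantCoeff f := by
  simp [intCoeff]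

lemma coeff_mul_X_pow_eq_intCoeff (f : PowerSeries R) (m d : ℕ) :
    coeff m (f * X ^ d) = f.intCoeff ((m : ℤ) - d) := by
  rw [coeff_mul_X_pow', intCoeff]
  by_cases h : d ≤ m
  · rw [if_pos h, if_neg (by omega), show ((m : ℤ) - d).toNat = m - d by omega]
  · rw [if_neg h, if_pos (by omega)]

lemma mk_pow_mul_one_sub_C_mul_X (a : R) : (mk fun n => a ^ n) * (1 - C a * X) = 1 := by
  simpa [rescale_mk, map_sub, mul_comm X] using congrArg (rescale a) (mk_one_mul_one_sub_eq_one R)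

end PowerSeries

section geomInv

open PowerSeries

variable {R : Type*} [CommRing R]

lemma one_sub_C_mul_X_mul_geomInv (a : R) : (1 - C a * X) * geomInv R a = 1 :=
  mul_invOfUnit _ 1 (by simp)

lemma geomInv_eq_mk (a : R) : geomInv R a = mk fun n => a ^ n :=
  (left_inv_eq_right_inv (mk_pow_mul_one_sub_C_mul_X a) (one_sub_C_mul_X_mul_geomInv a)).symm

lemma coeff_geomInv (a : R) (n : ℕ) : coeff n (geomInv R a) = a ^ n := by
  simp [geomInv_eq_mk]

lemma constantCoeff_geomInv (a : R) : constantCoeff (geomInv R a) = 1 := by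
  simp [geomInv_eq_mk]

end geomInv

open Polynomial

namespace Polynomial

variable {R : Type*} [CommRing R]

lemma reflect_prod {ι : Type*} (s : Finset ι) (q : ι → R[X]) (d : ι → ℕ)
    (hd : ∀ i ∈ s, (q i).natDegree ≤ d i) :
    (∏ i ∈ s, q i).reflect (∑ i ∈ s, d i) = ∏ i ∈ s, (q i).reflect (d i) := by
  induction s using Finset.cons_induction with
  | empty => simp [reflect_one]
  | cons a s ha ih =>
    simp only [Finset.forall_mem_cons] at hd
    have hprod : (∏ i ∈ s, q i).natDegree ≤ ∑ i ∈ s, d i :=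
      (natDegree_prod_le _ _).trans (Finset.sum_le_sum hd.2)
    rw [Finset.prod_cons, Finset.sum_cons, reflect_mul _ _ hd.1 hprod, ih hd.2, Finset.prod_cons]

lemma eq_sum_sub_X_pow_of_reflect_eq_neg {G : R[X]} {l : ℕ} (hdeg : G.natDegree ≤ 2 * l)
    (hmid : G.coeff l = 0) (hrefl : G.reflect (2 * l) = -G) :
    G = ∑ k ∈ Finset.range l, C (G.coeff k) * (X ^ k - X ^ (2 * l - k)) := by
  ext n
  simp only [finsetSum_coeff, coeff_C_mul, coeff_sub, coeff_X_pow, mul_sub, mul_ite, mul_one,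
    mul_zero, Finset.sum_sub_distrib, Finset.sum_ite_eq, Finset.mem_range]
  have hlow : ∀ n ≤ l, ∑ k ∈ Finset.range l, (if n = 2 * l - k then G.coeff k else 0) = 0 :=
    fun n hn => Finset.sum_eq_zero fun k hk => if_neg (by simp at hk; omega)
  rcases lt_trichotomy n l with hn | rfl | hn
  · rw [if_pos hn, hlow n hn.le, sub_zero]
  · rw [if_neg (lt_irrefl n), hlow n le_rfl, hmid, sub_zero]
  rw [if_neg (by omega), zero_sub]
  by_cases hn2 : n ≤ 2 * l
  · rw [Finset.sum_eq_single (2 * l - n) (fun k _ hk => if_neg (by omega))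
      (fun h => absurd (Finset.mem_range.2 (by omega)) h), if_pos (by omega)]
    have := congrArg (coeff · (2 * l - n)) hrefl
    simpa only [coeff_reflect, coeff_neg, revAt_le (Nat.sub_le _ _), Nat.sub_sub_self hn2]
      using this
  · rw [coeff_eq_zero_of_natDegree_lt (by omega),
      Finset.sum_eq_zero fun k hk => if_neg (by simp at hk; omega), neg_zero]

lemma reflect_one_sub_X_sq_mul {Q : R[X]} {m : ℕ} (hdeg : Q.natDegree ≤ 2 * m)
    (hQ : Q.reflect (2 * m) = Q) :
    ((1 - X ^ 2) * Q).reflect (2 * (m + 1)) = -((1 - X ^ 2) * Q) := by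
  have hX : (1 - X ^ 2 : R[X]).reflect 2 = -(1 - X ^ 2) := by
    simp [reflect_sub, reflect_one, reflect_monomial, revAt_le]
  rw [show 2 * (m + 1) = 2 + 2 * m by ring, reflect_mul _ _ (by compute_degree!) hdeg, hX, hQ,
    neg_mul]

lemma coeff_one_sub_X_sq_mul_middle {Q : R[X]} {m : ℕ} (hdeg : Q.natDegree ≤ 2 * m)
    (hQ : Q.reflect (2 * m) = Q) : ((1 - X ^ 2) * Q).coeff (m + 1) = 0 := by
  rw [sub_mul, one_mul, mul_comm, coeff_sub, coeff_mul_X_pow']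
  rcases m with _ | m
  · simp [coeff_eq_zero_of_natDegree_lt (show Q.natDegree < 1 by omega)]
  · have := congrArg (coeff · m) hQ
    simp only [coeff_reflect, revAt_le (show m ≤ 2 * (m + 1) by omega)] at this
    rw [if_pos (by omega), show m + 1 + 1 - 2 = m by omega, ← this,
      show 2 * (m + 1) - m = m + 1 + 1 by omega, sub_self]

end Polynomial

namespace PowerSeries

lemma coeff_mul_eq_sum_of_reflect_eq_neg {R : Type*} [CommRing R] (f : R⟦X⟧)
    {G : R[X]} {l : ℕ} (hdeg : G.natDegree ≤ 2 * l) (hmid : G.coeff l = 0)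
    (hrefl : G.reflect (2 * l) = -G) (m : ℕ) :
    coeff m (f * (G : R⟦X⟧)) = ∑ c : Fin l,
      (f.intCoeff (m - l + 1 + c) - f.intCoeff (m - l - 1 - c)) * G.coeff (l - 1 - c) := by
  have hsum : coeff m (f * (G : R⟦X⟧)) = ∑ k ∈ Finset.range l,
      G.coeff k * (f.intCoeff (m - k) - f.intCoeff (m - (2 * l - k : ℕ))) := by
    conv_lhs => rw [Polynomial.eq_sum_sub_X_pow_of_reflect_eq_neg hdeg hmid hrefl]
    rw [← Polynomial.coeToPowerSeries.ringHom_apply, map_sum, Finset.mul_sum, map_sum]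
    refine Finset.sum_congr rfl fun k _ => ?_
    simp only [Polynomial.coeToPowerSeries.ringHom_apply, Polynomial.coe_mul,
      Polynomial.coe_C, Polynomial.coe_pow, Polynomial.coe_X, mul_left_comm f, mul_sub,
      coeff_C_mul, map_sub, coeff_mul_X_pow_eq_intCoeff]
  rw [hsum, ← Finset.sum_range_reflect, ← Fin.sum_univ_eq_sum_range]
  refine Finset.sum_congr rfl fun c _ => ?_
  rw [mul_comm]
  congr 3 <;> omega

end PowerSeries

section JacobiTrudi

variable {R : Type*} [CommRing R]

def oJTMatrix (h : ℤ → R) (N : ℕ) (lam : Fin N → ℤ) :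
    Matrix (Fin N) (Fin N) R :=
  Matrix.of fun i j => h (lam i - (i : ℕ) + (j : ℕ)) - h (lam i - (i : ℕ) - (j : ℕ) - 2)

lemma oJT_eq_det_oJTMatrix (h : ℤ → R) (N : ℕ) (lam : Fin N → ℤ) :
    oJT R h N lam = (oJTMatrix h N lam).det :=
  rfl

lemma oJT_zero {h : ℤ → R} (h0 : h 0 = 1) (hneg : ∀ k < 0, h k = 0) (N : ℕ) :
    oJT R h N 0 = 1 := by
  rw [oJT, Matrix.det_of_isUpperTriangular]
  · exact Finset.prod_eq_one fun i _ => by simp [h0, hneg (-(i : ℕ) - (i : ℕ) - 2) (by omega)]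
  · intro i j (hij : j < i)
    simp [hneg _ (show -(i : ℕ) + (j : ℕ) < (0 : ℤ) by omega),
      hneg _ (show -(i : ℕ) - (j : ℕ) - 2 < (0 : ℤ) by omega)]

end JacobiTrudi

section Orthogonal

variable {F : Type*} [Field F]

def pmFactor (a : F) : F[X] := (1 - C a * X) * (1 - C a⁻¹ * X)

lemma natDegree_pmFactor_le (a : F) : (pmFactor a).natDegree ≤ 2 := by
  unfold pmFactor; compute_degree!

lemma reflect_pmFactor {a : F} (ha : a ≠ 0) : (pmFactor a).reflect 2 = pmFactor a := by
  have hlin : ∀ b : F, (1 - C b * X).reflect 1 = X - C b := fun b => by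
    simp [reflect_sub, reflect_one]
  have hinv : (C a * C a⁻¹ : F[X]) = 1 := by rw [← C_mul, mul_inv_cancel₀ ha, C_1]
  rw [pmFactor, reflect_mul (F := 1) (G := 1) _ _ (by compute_degree!) (by compute_degree!),
    hlin, hlin]
  linear_combination (1 - X ^ 2 : F[X]) * hinv

lemma geomInv_mul_geomInv_inv_mul_pmFactor (a : F) :
    geomInv F a * geomInv F a⁻¹ * (pmFactor a : PowerSeries F) = 1 := by
  rw [pmFactor]
  push_cast
  linear_combination ((1 - PowerSeries.C a * PowerSeries.X) * geomInv F a) *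
      one_sub_C_mul_X_mul_geomInv a⁻¹ + one_sub_C_mul_X_mul_geomInv a

lemma geomInv_add_geomInv_inv_sub_one_mul_pmFactor {a : F} (ha : a ≠ 0) :
    (geomInv F a + geomInv F a⁻¹ - 1) * (pmFactor a : PowerSeries F) =
      1 - PowerSeries.X ^ 2 := by
  have hinv : PowerSeries.C a * PowerSeries.C a⁻¹ = 1 := by
    rw [← map_mul, mul_inv_cancel₀ ha, map_one]
  rw [pmFactor]
  push_cast
  linear_combination (1 - PowerSeries.C a⁻¹ * PowerSeries.X) * one_sub_C_mul_X_mul_geomInv a +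
    (1 - PowerSeries.C a * PowerSeries.X) * one_sub_C_mul_X_mul_geomInv a⁻¹ -
    PowerSeries.X ^ 2 * hinv

variable {l : ℕ} (x : Fin l → F)

def pmSeries : PowerSeries F := ((pmList x).map (geomInv F)).prod

lemma genH_pmList : genH F (pmList x) = (pmSeries x).intCoeff := rfl

lemma pmSeries_eq_prod : pmSeries x = ∏ i, geomInv F (x i) * geomInv F (x i)⁻¹ := by
  rw [pmSeries, pmList, List.map_append, List.prod_append, List.map_ofFn, List.map_ofFn,
    List.prod_ofFn, List.prod_ofFn, ← Finset.prod_mul_distrib]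
  rfl

lemma constantCoeff_pmSeries : PowerSeries.constantCoeff (pmSeries x) = 1 := by
  simp [pmSeries_eq_prod, constantCoeff_geomInv]

lemma pmSeries_mul_prod_pmFactor :
    pmSeries x * ((∏ i, pmFactor (x i) : F[X]) : PowerSeries F) = 1 := by
  rw [pmSeries_eq_prod, ← coeToPowerSeries.ringHom_apply, map_prod, ← Finset.prod_mul_distrib]
  exact Finset.prod_eq_one fun i _ => geomInv_mul_geomInv_inv_mul_pmFactor (x i)

lemma natDegree_prod_erase_pmFactor_le (j : Fin l) :
    (∏ i ∈ Finset.univ.erase j, pmFactor (x i)).natDegree ≤ 2 * (l - 1) := by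
  refine (natDegree_prod_le _ _).trans
    ((Finset.sum_le_sum fun i _ => natDegree_pmFactor_le (x i)).trans ?_)
  simp [Finset.card_erase_of_mem, mul_comm]

lemma reflect_prod_erase_pmFactor (hx : ∀ i, x i ≠ 0) (j : Fin l) :
    (∏ i ∈ Finset.univ.erase j, pmFactor (x i)).reflect (2 * (l - 1)) =
      ∏ i ∈ Finset.univ.erase j, pmFactor (x i) := by
  have h := reflect_prod (Finset.univ.erase j) (fun i => pmFactor (x i)) (fun _ => 2)
    (fun i _ => natDegree_pmFactor_le (x i))
  simpa [Finset.card_erase_of_mem, mul_comm, reflect_pmFactor (hx _)] using h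

def columnPoly (j : Fin l) : F[X] := (1 - X ^ 2) * ∏ i ∈ Finset.univ.erase j, pmFactor (x i)

lemma pmSeries_mul_columnPoly (hx : ∀ i, x i ≠ 0) (j : Fin l) :
    pmSeries x * (columnPoly x j : PowerSeries F) = geomInv F (x j) + geomInv F (x j)⁻¹ - 1 := by
  have hP := pmSeries_mul_prod_pmFactor x
  rw [← Finset.mul_prod_erase _ _ (Finset.mem_univ j)] at hP
  set Q : F[X] := ∏ i ∈ Finset.univ.erase j, pmFactor (x i)
  rw [columnPoly]
  push_cast at hP ⊢
  linear_combination (-(pmSeries x * (Q : PowerSeries F))) *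
      geomInv_add_geomInv_inv_sub_one_mul_pmFactor (hx j) +
    (geomInv F (x j) + geomInv F (x j)⁻¹ - 1) * hP

lemma natDegree_columnPoly_le (j : Fin l) : (columnPoly x j).natDegree ≤ 2 * l := by
  have hQ := natDegree_prod_erase_pmFactor_le x j
  have hX : (1 - X ^ 2 : F[X]).natDegree ≤ 2 := by compute_degree!
  have := j.pos
  exact natDegree_mul_le.trans (by omega)

lemma reflect_columnPoly (hx : ∀ i, x i ≠ 0) (j : Fin l) :
    (columnPoly x j).reflect (2 * l) = -columnPoly x j := by
  have h := reflect_one_sub_X_sq_mul (natDegree_prod_erase_pmFactor_le x j)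
    (reflect_prod_erase_pmFactor x hx j)
  rwa [Nat.sub_add_cancel j.pos] at h

lemma coeff_columnPoly_self (hx : ∀ i, x i ≠ 0) (j : Fin l) : (columnPoly x j).coeff l = 0 := by
  have h := coeff_one_sub_X_sq_mul_middle (natDegree_prod_erase_pmFactor_le x j)
    (reflect_prod_erase_pmFactor x hx j)
  rwa [Nat.sub_add_cancel j.pos] at h

lemma zpow_add_zpow_neg_eq_sum (hx : ∀ i, x i ≠ 0) (j : Fin l) {e : ℤ} (he : 0 ≤ e) :
    x j ^ e + x j ^ (-e) = (if e = 0 then 1 else 0) + ∑ c : Fin l,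
      (genH F (pmList x) (e - l + 1 + c) - genH F (pmList x) (e - l - 1 - c)) *
        (columnPoly x j).coeff (l - 1 - c) := by
  lift e to ℕ using he with m
  have h := congrArg (PowerSeries.coeff m) (pmSeries_mul_columnPoly x hx j)
  rw [PowerSeries.coeff_mul_eq_sum_of_reflect_eq_neg _ (natDegree_columnPoly_le x j)
    (coeff_columnPoly_self x hx j) (reflect_columnPoly x hx j)] at h
  rw [genH_pmList, h]
  simp [coeff_geomInv, PowerSeries.coeff_one, zpow_neg, inv_pow]

lemma oJT_genH_pmList_zero : oJT F (genH F (pmList x)) l 0 = 1 :=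
  oJT_zero (by rw [genH_pmList, PowerSeries.intCoeff_zero, constantCoeff_pmSeries])
    (fun _ hk => by rw [genH_pmList, PowerSeries.intCoeff_of_neg _ hk]) l

def columnPolyCoeffMatrix : Matrix (Fin l) (Fin l) F :=
  Matrix.of fun c j => (columnPoly x j).coeff (l - 1 - c)

lemma transpose_bialternant_eq_oJTMatrix_mul (hx : ∀ i, x i ≠ 0) (lam : Fin l → ℤ)
    (hlam : ∀ i, 0 ≤ lam i) :
    (Matrix.of fun i j : Fin l =>
        x i ^ (lam j + l - (j : ℕ) - 1) + x i ^ (-(lam j + l - (j : ℕ) - 1))).transpose =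
      Matrix.of fun i j => (if lam i + l - (i : ℕ) - 1 = 0 then 2 else 1) *
        (oJTMatrix (genH F (pmList x)) l lam * columnPolyCoeffMatrix x) i j := by
  ext i j
  have hsum := zpow_add_zpow_neg_eq_sum x hx j (e := lam i + l - (i : ℕ) - 1)
    (by have := hlam i; omega)
  have hTE : ∑ c : Fin l, (genH F (pmList x) (lam i + l - (i : ℕ) - 1 - l + 1 + c) -
        genH F (pmList x) (lam i + l - (i : ℕ) - 1 - l - 1 - c)) *
          (columnPoly x j).coeff (l - 1 - c) =
      (oJTMatrix (genH F (pmList x)) l lam * columnPolyCoeffMatrix x) i j := by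
    refine Finset.sum_congr rfl fun c _ => ?_
    simp only [oJTMatrix, columnPolyCoeffMatrix, Matrix.of_apply]
    congr 3 <;> ring
  rw [hTE] at hsum
  simp only [Matrix.transpose_apply, Matrix.of_apply]
  split_ifs at hsum ⊢ with h0
  · simp only [h0, neg_zero, zpow_zero] at hsum ⊢
    linear_combination 2 * hsum
  · rw [hsum, zero_add, one_mul]

lemma det_bialternant_eq (hx : ∀ i, x i ≠ 0) (hl : 0 < l) (lam : Fin l → ℤ)
    (hlam : ∀ i, 0 ≤ lam i) (hlast : lam ⟨l - 1, Nat.sub_lt hl Nat.one_pos⟩ = 0) :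
    (Matrix.of fun i j : Fin l =>
        x i ^ (lam j + l - (j : ℕ) - 1) + x i ^ (-(lam j + l - (j : ℕ) - 1))).det =
      2 * oJT F (genH F (pmList x)) l lam * (columnPolyCoeffMatrix x).det := by
  have hzero (i : Fin l) :
      lam i + l - (i : ℕ) - 1 = 0 ↔ i = ⟨l - 1, Nat.sub_lt hl Nat.one_pos⟩ := by
    refine ⟨fun h => Fin.ext ?_, fun h => ?_⟩
    · have := hlam i
      show (i : ℕ) = l - 1
      omega
    · subst h; simp only [hlast]; omega
  rw [← Matrix.det_transpose, transpose_bialternant_eq_oJTMatrix_mul x hx lam hlam,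
    Matrix.det_mul_column, Matrix.det_mul, oJT_eq_det_oJTMatrix, mul_assoc]
  simp only [hzero, Finset.prod_ite_eq', Finset.mem_univ, if_true]

end Orthogonal

/-- **Bialternant = Jacobi–Trudi for even orthogonal characters.**
For a partition `λ = (λ_1,…,λ_l)` with `λ_l = 0` (with nonvanishing denominator),
`det(x_i^{λ_j+l−j} + x_i^{−(λ_j+l−j)}) / det(x_i^{l−j} + x_i^{−(l−j)})
 = det( h_{λ_i−i+j}(x^±) − h_{λ_i−i−j}(x^±) )`. -/
theorem orthogonal_bialternant_eq_jacobiTrudi {F : Type*} [Field F] {l : ℕ}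
    (x : Fin l → F) (hx : ∀ i, x i ≠ 0)
    (lam : Fin l → ℕ)
    (hlast : ∀ h : 0 < l, lam ⟨l - 1, by omega⟩ = 0)
    (hden : Matrix.det (Matrix.of fun i j : Fin l =>
      (x i) ^ ((l : ℤ) - (j : ℕ) - 1) + (x i) ^ (-((l : ℤ) - (j : ℕ) - 1))) ≠ 0) :
    Matrix.det (Matrix.of fun i j : Fin l =>
        (x i) ^ ((lam j : ℤ) + l - (j : ℕ) - 1) +
          (x i) ^ (-((lam j : ℤ) + l - (j : ℕ) - 1))) /
      Matrix.det (Matrix.of fun i j : Fin l =>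
        (x i) ^ ((l : ℤ) - (j : ℕ) - 1) + (x i) ^ (-((l : ℤ) - (j : ℕ) - 1))) =
    oJT F (genH F (pmList x)) l (fun i => (lam i : ℤ)) := by
  rcases Nat.eq_zero_or_pos l with rfl | hl
  · simp [oJT]
  have hnum := det_bialternant_eq x hx hl (fun i => (lam i : ℤ)) (fun i => Int.natCast_nonneg _)
    (by exact_mod_cast hlast hl)
  have hdet := det_bialternant_eq x hx hl 0 (fun _ => le_rfl) rfl
  simp only [Pi.zero_apply, zero_add, oJT_genH_pmList_zero, mul_one] at hdet
  rw [hdet] at hden ⊢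
  rw [hnum, div_eq_iff hden]
  ring
end
end

section
/- (Transition formula for z-extended orthogonal functions) For λ = (λ_1,…,λ_n,0) and x̲^± = (x_1^{±1},…,x_n^{±1}, z^{±1}), one has o_λ(x^±;z) = ∑_{ε ∈ {0,1}^n} (−z^{−1})^{|ε|} · o_{(λ_1−ε_1,…,λ_n−ε_n)}(x̲^±), where terms with non-partition index vanish (the Jacobi–Trudi determinant is 0 in that case). -/
/-!
Since the alphabet `x̲^±` is `(x^±, z)` together with `z⁻¹`, multiplying its generating function
by `1 - z⁻¹w` gives that of `(x^±; z)`, i.e. `h_k(x^±;z) = h_k(x̲^±) - z⁻¹ h_{k-1}(x̲^±)`.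
Hence row `i` of the Jacobi–Trudi matrix of `o_λ(x^±;z)` is the row of `o(x̲^±)` for the part
`λ_i` minus `z⁻¹` times the row for the part `λ_i - 1`, and multilinearity of the determinant
expands it over `ε ∈ {0,1}^{n+1}`. The terms with `ε_{n+1} = 1` vanish: their last row only
involves `h` in negative degrees.
-/

open scoped BigOperators
noncomputable section

lemma geomInv_mul_one_sub {R : Type*} [CommRing R] (a : R) :
    geomInv R a * (1 - PowerSeries.C a * PowerSeries.X) = 1 :=
  PowerSeries.invOfUnit_mul _ 1 (by simp)

lemma genH_of_neg {R : Type*} [CommRing R] (xs : List R) {k : ℤ} (hk : k < 0) :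
    genH R xs k = 0 :=
  if_pos hk

lemma genH_perm {R : Type*} [CommRing R] {xs ys : List R} (h : xs.Perm ys) :
    genH R xs = genH R ys := by
  ext k
  simp only [genH, (h.map _).prod_eq]

lemma genH_eq_sub_genH_cons {R : Type*} [CommRing R] (xs : List R) (a : R) (k : ℤ) :
    genH R xs k = genH R (a :: xs) k - a * genH R (a :: xs) (k - 1) := by
  have hP : (xs.map (geomInv R)).prod = ((a :: xs).map (geomInv R)).prod -
      PowerSeries.C a * (((a :: xs).map (geomInv R)).prod * PowerSeries.X) := by
    simp only [List.map_cons, List.prod_cons]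
    linear_combination (-(xs.map (geomInv R)).prod) * geomInv_mul_one_sub a
  obtain hk | rfl | ⟨m, rfl⟩ : k < 0 ∨ k = 0 ∨ ∃ m : ℕ, k = m + 1 := by
    rcases lt_trichotomy k 0 with h | h | h
    exacts [.inl h, .inr (.inl h), .inr (.inr ⟨(k - 1).toNat, by omega⟩)]
  · simp [genH_of_neg _ hk, genH_of_neg _ (show k - 1 < 0 by omega)]
  · simp only [genH, hP, lt_irrefl, if_false, zero_sub, Int.reduceNeg]
    simp
  · have hm : (m + 1 : ℤ).toNat = m + 1 := by omega
    simp only [genH, hP, hm, add_sub_cancel_right, Int.toNat_natCast, map_sub,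
      PowerSeries.coeff_C_mul, PowerSeries.coeff_succ_mul_X]
    simp [show ¬ (m : ℤ) + 1 < 0 by omega]

lemma pmList_snoc_perm {F : Type*} [Field F] {n : ℕ} (x : Fin n → F) (z : F) :
    (pmList (Fin.snoc x z)).Perm (z⁻¹ :: (pmList x ++ [z])) := by
  simp only [pmList, List.ofFn_succ', Fin.snoc_castSucc, Fin.snoc_last, List.concat_eq_append,
    List.append_assoc, List.singleton_append]
  refine List.perm_middle.trans ?_
  simp only [← List.append_assoc]
  exact ((List.perm_append_singleton _ _).cons z).trans
    ((List.Perm.swap _ _ _).trans ((List.perm_append_singleton _ _).symm.cons z⁻¹))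

lemma det_of_rows_eq_sum {R ι : Type*} [CommRing R] [Fintype ι] [DecidableEq ι] {m : Type*}
    [Fintype m] [DecidableEq m] (c : m → ι → R) (A : m → ι → m → R) :
    Matrix.det (Matrix.of fun i => ∑ e, c i e • A i e) =
      ∑ f : m → ι, (∏ i, c i (f i)) * Matrix.det (Matrix.of fun i => A i (f i)) := by
  refine ((Matrix.detRowAlternating (R := R) (n := m)).toMultilinearMap.map_sum
    (fun i e => c i e • A i e)).trans (Finset.sum_congr rfl fun f _ => ?_)
  exact Matrix.detRowAlternating.toMultilinearMap.map_smul_univ _ _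

lemma sum_fun_fin_succ_eq_sum_snoc {M α : Type*} [AddCommMonoid M] [Fintype α] {n : ℕ}
    (f : (Fin (n + 1) → α) → M) :
    ∑ ε, f ε = ∑ a, ∑ q : Fin n → α, f (Fin.snoc q a) := by
  rw [← (Fin.snocEquiv fun _ => α).sum_comp, Fintype.sum_prod_type]
  rfl

lemma oJT_sub_mul_shift {R : Type*} [CommRing R] (h : ℤ → R) (c : R) (N : ℕ)
    (lam : Fin N → ℤ) :
    oJT R (fun k => h k - c * h (k - 1)) N lam =
      ∑ ε : Fin N → Fin 2, (-c) ^ (∑ i, (ε i : ℕ)) * oJT R h N (fun i => lam i - (ε i : ℕ)) := by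
  have hrows : (Matrix.of fun i j : Fin N =>
      (h (lam i - i + j) - c * h (lam i - i + j - 1)) -
        (h (lam i - i - j - 2) - c * h (lam i - i - j - 2 - 1))) =
      Matrix.of fun i => ∑ e : Fin 2, (-c) ^ (e : ℕ) •
        fun j : Fin N => h (lam i - (e : ℕ) - i + j) - h (lam i - (e : ℕ) - i - j - 2) := by
    ext i j
    simp only [Matrix.of_apply, Fin.sum_univ_two, Pi.add_apply, Pi.smul_apply, smul_eq_mul,
      Fin.val_zero, Fin.val_one, Nat.cast_zero, Nat.cast_one, pow_zero, pow_one, sub_zero]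
    ring_nf
  rw [oJT, hrows, det_of_rows_eq_sum]
  refine Finset.sum_congr rfl fun ε _ => ?_
  rw [Finset.prod_pow_eq_pow_sum, oJT]

lemma oJT_eq_zero_of_last_neg {R : Type*} [CommRing R] {h : ℤ → R}
    (hneg : ∀ k < 0, h k = 0) {n : ℕ} (lam : Fin (n + 1) → ℤ) (hlast : lam (Fin.last n) < 0) :
    oJT R h (n + 1) lam = 0 := by
  refine Matrix.det_eq_zero_of_row_eq_zero (Fin.last n) fun j => ?_
  have hj : (j : ℕ) ≤ n := Fin.is_le j
  simp only [Matrix.of_apply, Fin.val_last]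
  rw [hneg _ (by omega), hneg _ (by omega), sub_zero]

theorem orthogonal_transition_general {F : Type*} [Field F] {n : ℕ}
    (x : Fin n → F) (z : F)
    (lam : Fin n → ℕ) :
    oJT F (genH F (pmList x ++ [z])) (n + 1)
        (fun j => if hj : (j : ℕ) < n then (lam ⟨j, hj⟩ : ℤ) else 0) =
      ∑ eps : Fin n → Fin 2,
        (-z⁻¹) ^ (∑ i, (eps i : ℕ)) *
          oJT F (genH F (pmList (Fin.snoc x z))) (n + 1)
            (fun j => if hj : (j : ℕ) < n then (lam ⟨j, hj⟩ : ℤ) - (eps ⟨j, hj⟩ : ℕ) else 0) := by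
  set H := genH F (pmList (Fin.snoc x z))
  have hsplit : genH F (pmList x ++ [z]) = fun k => H k - z⁻¹ * H (k - 1) := by
    ext k
    rw [genH_eq_sub_genH_cons _ z⁻¹, ← genH_perm (pmList_snoc_perm x z)]
  rw [hsplit, oJT_sub_mul_shift, sum_fun_fin_succ_eq_sum_snoc, Fin.sum_univ_two]
  refine (add_eq_left.mpr (Finset.sum_eq_zero fun q _ => ?_)).trans
    (Finset.sum_congr rfl fun q _ => ?_)
  · rw [oJT_eq_zero_of_last_neg (fun k hk => genH_of_neg _ hk) _ (by simp), mul_zero]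
  congr 2
  · simp [Fin.sum_univ_castSucc]
  · funext i
    induction i using Fin.lastCases <;> simp

/-- **Transition formula for `z`-extended orthogonal functions.**
For `λ = (λ_1,…,λ_n,0)` and `x̲^± = (x_1^±,…,x_n^±,z^±)`,
`o_λ(x^±;z) = ∑_{ε ∈ {0,1}^n} (−z⁻¹)^{|ε|} o_{(λ_1−ε_1,…,λ_n−ε_n)}(x̲^±)`
(padding `λ` and `λ−ε` by a last part `0`); terms with non-partition index vanish,
their Jacobi–Trudi determinant being `0`. -/
theorem orthogonal_transition {F : Type*} [Field F] {n : ℕ}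
    (x : Fin n → F) (hx : ∀ i, x i ≠ 0) (z : F) (hz : z ≠ 0)
    (lam : Fin n → ℕ) (hlam : Antitone lam) :
    oJT F (genH F (pmList x ++ [z])) (n + 1)
        (fun j => if hj : (j : ℕ) < n then (lam ⟨j, hj⟩ : ℤ) else 0) =
      ∑ eps : Fin n → Fin 2,
        (-z⁻¹) ^ (∑ i, (eps i : ℕ)) *
          oJT F (genH F (pmList (Fin.snoc x z))) (n + 1)
            (fun j => if hj : (j : ℕ) < n then (lam ⟨j, hj⟩ : ℤ) - (eps ⟨j, hj⟩ : ℕ) else 0) :=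
  orthogonal_transition_general x z lam
end
end
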